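/- arXiv:math/0105175 — 2 statements merged into one kernel-verified Lean document; each statement's English description precedes it below -/
import Mathlib

section
/- Let R be a commutative ring, M an R-module, and let D₁ (playing the role of ∂̄), D₂ (playing the role of ∂), S (playing the role of ∂̄*), G and h be R-linear endomorphisms of M satisfying: D₁ ∘ G = G ∘ D₁, D₂ ∘ G = G ∘ D₂, D₂ ∘ S = − S ∘ D₂, D₂ ∘ D₂ = 0, D₂ ∘ D₁ = − D₁ ∘ D₂, G ∘ (D₁ ∘ S + S ∘ D₁) = id_M − h, and h ∘ D₂ = 0. Define τ = G ∘ S ∘ D₂. Then: (1) D₂ ∘ τ = 0; (2) τ ∘ D₂ = 0; and (3) D₁ ∘ τ − τ ∘ D₁ = D₂. -/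
section Ring

variable {A : Type*} [Ring A]

theorem mul_mul_mul_eq_zero_of_mul_self_eq_zero {d g s : A} (hg : d * g = g * d)
    (hs : d * s = -(s * d)) (hd : d * d = 0) : d * (g * s * d) = 0 :=
  calc d * (g * s * d) = g * (d * s) * d := by simp only [← mul_assoc, hg]
    _ = -(g * s * (d * d)) := by rw [hs]; noncomm_ring
    _ = 0 := by rw [hd, mul_zero, neg_zero]

theorem mul_sub_mul_eq_mul_anticomm_mul {a d g s : A} (hg : a * g = g * a)
    (hd : d * a = -(a * d)) : a * (g * s * d) - g * s * d * a = g * (a * s + s * a) * d :=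
  calc a * (g * s * d) - g * s * d * a = g * (a * s) * d - g * s * (d * a) := by
        simp only [← mul_assoc, hg]
    _ = g * (a * s + s * a) * d := by rw [hd]; noncomm_ring

end Ring

/-- Abstract form of the Kähler identities `∂τ = τ∂ = 0` and `[∂̄, τ] = ∂` for
`τ = G ∂̄* ∂`, where `D₁` plays the role of `∂̄`, `D₂` of `∂`, `S` of `∂̄*`,
`G` of the Green operator and `h` of the harmonic projector. -/
theorem tau_identities {R M : Type*} [CommRing R] [AddCommGroup M] [Module R M]
    (D₁ D₂ S G h : Module.End R M)
    (h1 : D₁ * G = G * D₁) (h2 : D₂ * G = G * D₂)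
    (h3 : D₂ * S = -(S * D₂)) (h4 : D₂ * D₂ = 0) (h5 : D₂ * D₁ = -(D₁ * D₂))
    (h6 : G * (D₁ * S + S * D₁) = 1 - h) (h7 : h * D₂ = 0) :
    D₂ * (G * S * D₂) = 0 ∧ (G * S * D₂) * D₂ = 0 ∧
      D₁ * (G * S * D₂) - (G * S * D₂) * D₁ = D₂ := by
  refine ⟨mul_mul_mul_eq_zero_of_mul_self_eq_zero h2 h3 h4, by rw [mul_assoc, h4, mul_zero], ?_⟩
  rw [mul_sub_mul_eq_mul_anticomm_mul h1 h5, h6, sub_mul, h7, one_mul, sub_zero]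
end

section
/- Let R be a commutative ring and M an R-module. Fix an integer m ≥ 1, R-linear endomorphisms x₁, …, x_m, h, i, τ, D, P of M, and integers e₁, …, e_m, such that h ∘ D = 0, D ∘ i = 0, and P = D ∘ τ − τ ∘ D. For endomorphisms y₁, …, y_m of M write Π(y₁, …, y_m) = h ∘ y₁ ∘ τ ∘ y₂ ∘ τ ∘ ⋯ ∘ τ ∘ y_m ∘ i (with a factor τ between consecutive y's), and for 1 ≤ j ≤ m−1 write Π_j(y₁, …, y_m) for the same composition in which the occurrence of τ between y_j and y_{j+1} is replaced by P. Then Σ_{j=1}^{m} (−1)^{e₁+⋯+e_{j−1}} Π(x₁, …, x_{j−1}, D ∘ x_j − (−1)^{e_j} x_j ∘ D, x_{j+1}, …, x_m) = − Σ_{j=1}^{m−1} (−1)^{e₁+⋯+e_j} Π_j(x₁, …, x_m). -/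
/-- `chain τ [y₁, …, y_m] = y₁ ∘ τ ∘ y₂ ∘ τ ∘ ⋯ ∘ τ ∘ y_m` : the composition of the
listed endomorphisms with a factor `τ` inserted between consecutive entries. -/
def chain {R M : Type*} [CommRing R] [AddCommGroup M] [Module R M]
    (τ : Module.End R M) : List (Module.End R M) → Module.End R M
  | [] => 1
  | [y] => y
  | y :: ys => y * τ * chain τ ys

lemma map_update_range {α : Type*} (x : ℕ → α) (y : α) {j m : ℕ} (hj : j < m) :
    (List.range m).map (Function.update x j y) =
      ((List.range m).map x).take j ++ y :: ((List.range m).map x).drop (j+1) := by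
  apply List.ext_getElem
  · simp; omega
  · intro k hk hk'
    simp only [List.getElem_map]
    rw [List.getElem_range]
    rw [List.getElem_append]
    simp only [List.length_take, List.length_map, List.length_range,
      Nat.min_eq_left hj.le] at *
    split_ifs with h'
    · rw [List.getElem_take, List.getElem_map, List.getElem_range,
        Function.update_of_ne (by omega)]
    · rcases Nat.eq_or_lt_of_le (Nat.le_of_not_lt h') with rfl | h3
      · simp
      · rw [List.getElem_cons, dif_neg (by omega)]
        simp only [List.getElem_drop, List.getElem_map]
        rw [List.getElem_range, Function.update_of_ne (by omega)]
        congr 1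
        omega

section ChainLemmas
variable {R M : Type*} [CommRing R] [AddCommGroup M] [Module R M]

lemma chain_cons (τ y : Module.End R M) (ys : List (Module.End R M)) (hys : ys ≠ []) :
    chain τ (y :: ys) = y * τ * chain τ ys := by
  match ys with
  | a :: l => rfl

lemma chain_append (τ : Module.End R M) (l₁ l₂ : List (Module.End R M))
    (h₁ : l₁ ≠ []) (h₂ : l₂ ≠ []) :
    chain τ (l₁ ++ l₂) = chain τ l₁ * τ * chain τ l₂ := by
  induction l₁ with
  | nil => contradiction
  | cons a l ih =>
    cases l with
    | nil => simpa [chain] using chain_cons τ a l₂ h₂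
    | cons b t =>
      rw [List.cons_append, chain_cons τ a _ (by simp), ih (by simp),
        chain_cons τ a (b :: t) (by simp)]
      simp [mul_assoc]

/-- `h · (chain of l) · τ`, degenerating to `h` when `l` is empty. -/
def cpre (h τ : Module.End R M) : List (Module.End R M) → Module.End R M
  | [] => h
  | (a :: l) => h * chain τ (a :: l) * τ

/-- `τ · (chain of l) · i`, degenerating to `i` when `l` is empty. -/
def csuf (i τ : Module.End R M) : List (Module.End R M) → Module.End R M
  | [] => i
  | (a :: l) => τ * chain τ (a :: l) * i

lemma sandwich (h i τ : Module.End R M) (l₁ l₂ : List (Module.End R M))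
    (y : Module.End R M) :
    h * chain τ (l₁ ++ y :: l₂) * i = cpre h τ l₁ * y * csuf i τ l₂ := by
  cases l₁ with
  | nil =>
    cases l₂ with
    | nil => simp [cpre, csuf, chain]
    | cons b t => simp [cpre, csuf, chain_cons τ y (b :: t) (by simp), mul_assoc]
  | cons a s =>
    cases l₂ with
    | nil =>
      rw [chain_append τ (a :: s) [y] (by simp) (by simp)]
      simp [cpre, csuf, chain, mul_assoc]
    | cons b t =>
      rw [chain_append τ (a :: s) (y :: b :: t) (by simp) (by simp),
        chain_cons τ y (b :: t) (by simp)]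
      simp [cpre, csuf, mul_assoc]

end ChainLemmas

/-- The telescoping identity at the heart of Theorem 2.2 of Manetti's paper:
with `Π(y₁,…,y_m) = h y₁ τ y₂ τ ⋯ τ y_m i` and `Π_j` the same composition with the `τ`
between `y_j` and `y_{j+1}` replaced by `P = Dτ − τD`, and assuming `hD = 0`, `Di = 0`,
one has
`Σ_j (−1)^{e₁+⋯+e_{j−1}} Π(x₁,…,Dx_j−(−1)^{e_j}x_jD,…,x_m)
   = − Σ_j (−1)^{e₁+⋯+e_j} Π_j(x₁,…,x_m)`.
Here the paper's `x₁,…,x_m` and `e₁,…,e_m` are `x 0, …, x (m−1)` and `e 0, …, e (m−1)`. -/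
theorem telescoping_identity {R M : Type*} [CommRing R] [AddCommGroup M] [Module R M]
    (m : ℕ) (hm : 1 ≤ m) (x : ℕ → Module.End R M) (e : ℕ → ℤ)
    (h i τ D P : Module.End R M)
    (hhD : h * D = 0) (hDi : D * i = 0) (hP : P = D * τ - τ * D) :
    ∑ j ∈ Finset.range m, ((Int.negOnePow (∑ k ∈ Finset.range j, e k) : ℤˣ) : ℤ) •
        (h * chain τ ((List.range m).map
            (Function.update x j
              (D * x j - ((Int.negOnePow (e j) : ℤˣ) : ℤ) • (x j * D)))) * i)
      = - ∑ j ∈ Finset.Icc 1 (m - 1), ((Int.negOnePow (∑ k ∈ Finset.range j, e k) : ℤˣ) : ℤ) •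
          (h * chain τ (((List.range m).map x).take j) * P *
            chain τ (((List.range m).map x).drop j) * i) := by
  set L : List (Module.End R M) := (List.range m).map x with hL
  have hLlen : L.length = m := by simp [hL]
  -- sign abbreviation
  set s : ℕ → ℤ := fun j => ((Int.negOnePow (∑ k ∈ Finset.range j, e k) : ℤˣ) : ℤ) with hs
  have hsign : ∀ j, s j * ((Int.negOnePow (e j) : ℤˣ) : ℤ) = s (j + 1) := by
    intro j
    simp only [hs]
    rw [← Units.val_mul, ← Int.negOnePow_add, ← Finset.sum_range_succ]
  -- the two families of "D-inserted" compositions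
  set A : ℕ → Module.End R M :=
    fun j => h * chain τ (L.take j) * D * csuf i τ (L.drop j) with hA
  set B : ℕ → Module.End R M :=
    fun j => cpre h τ (L.take j) * D * (chain τ (L.drop j) * i) with hB
  -- basic take/drop facts
  have hdrop : ∀ j, j < m → L.drop j = x j :: L.drop (j + 1) := by
    intro j hj
    rw [List.drop_eq_getElem_cons (by omega)]
    congr 1
    simp [hL]
  have htake : ∀ j, j < m → L.take (j + 1) = L.take j ++ [x j] := by
    intro j hj
    rw [List.take_succ]
    congr 1
    rw [List.getElem?_eq_getElem (by omega)]
    simp [hL]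
  have htake_ne : ∀ j, 1 ≤ j → L.take j ≠ [] := by
    intro j hj hcon
    have := congrArg List.length hcon
    simp [hLlen] at this
    omega
  have hdrop_ne : ∀ j, j < m → L.drop j ≠ [] := by
    intro j hj hcon
    have := congrArg List.length hcon
    simp [hLlen] at this
    omega
  -- claim C1
  have hC1 : ∀ j, j < m →
      cpre h τ (L.take j) * (D * x j) * csuf i τ (L.drop (j + 1)) = B j := by
    intro j hj
    simp only [hB]
    rw [hdrop j hj]
    rcases hd : L.drop (j + 1) with _ | ⟨a, l⟩
    · simp only [csuf, chain, mul_assoc]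
    · rw [chain_cons τ (x j) (a :: l) (by simp)]
      simp only [csuf, mul_assoc]
  -- claim C2
  have hC2 : ∀ j, j < m →
      cpre h τ (L.take j) * (x j * D) * csuf i τ (L.drop (j + 1)) = A (j + 1) := by
    intro j hj
    simp only [hA]
    rw [htake j hj]
    rcases ht : L.take j with _ | ⟨a, l⟩
    · simp only [cpre, chain, List.nil_append, mul_assoc]
    · rw [chain_append τ (a :: l) [x j] (by simp) (by simp)]
      simp only [cpre, chain, mul_assoc]
  -- boundary vanishing
  have hB0 : B 0 = 0 := by
    simp only [hB, List.take_zero, cpre, List.drop_zero]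
    rw [mul_assoc, ← mul_assoc h D, hhD, zero_mul]
  have hAm : A m = 0 := by
    simp only [hA, List.drop_eq_nil_of_le (le_of_eq hLlen), csuf]
    rw [mul_assoc, hDi, mul_zero]
  -- claim C3
  have hC3 : ∀ j, 1 ≤ j → j ≤ m - 1 →
      B j - A j = -(h * chain τ (L.take j) * P * chain τ (L.drop j) * i) := by
    intro j h1 h2
    rcases ht : L.take j with _ | ⟨a, l⟩
    · exact absurd ht (htake_ne j h1)
    rcases hd : L.drop j with _ | ⟨b, t⟩
    · exact absurd hd (hdrop_ne j (by omega))
    simp only [hA, hB, ht, hd, cpre, csuf, hP]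
    rw [← ht, ← hd]
    simp only [mul_sub, sub_mul, mul_assoc]
    abel
  -- rewrite each summand of the LHS
  have hterm : ∀ j ∈ Finset.range m,
      s j • (h * chain τ ((List.range m).map
          (Function.update x j
            (D * x j - ((Int.negOnePow (e j) : ℤˣ) : ℤ) • (x j * D)))) * i)
        = s j • B j - s (j + 1) • A (j + 1) := by
    intro j hj
    rw [Finset.mem_range] at hj
    rw [map_update_range x _ hj, ← hL, sandwich]
    rw [mul_sub, sub_mul, hC1 j hj]
    rw [mul_smul_comm, smul_mul_assoc, hC2 j hj]
    rw [smul_sub, smul_smul, hsign j]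
  rw [Finset.sum_congr rfl hterm, Finset.sum_sub_distrib]
  -- reindex both sums
  obtain ⟨n, rfl⟩ : ∃ n, m = n + 1 := ⟨m - 1, by omega⟩
  rw [Finset.sum_range_succ' (fun j => s j • B j) n,
    Finset.sum_range_succ (fun j => s (j + 1) • A (j + 1)) n]
  rw [hB0, smul_zero, add_zero, hAm, smul_zero, add_zero]
  rw [← Finset.sum_sub_distrib]
  have hIcc : Finset.Icc 1 (n + 1 - 1) = Finset.map ⟨fun j => j + 1, add_left_injective 1⟩
      (Finset.range n) := by
    ext k
    simp only [Finset.mem_Icc, Finset.mem_map, Function.Embedding.coeFn_mk,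
      Finset.mem_range, Nat.add_sub_cancel]
    constructor
    · rintro ⟨h1, h2⟩; exact ⟨k - 1, by omega, by omega⟩
    · rintro ⟨a, ha, rfl⟩; omega
  rw [hIcc, Finset.sum_map, ← Finset.sum_neg_distrib]
  apply Finset.sum_congr rfl
  intro j hj
  rw [Finset.mem_range] at hj
  simp only [Function.Embedding.coeFn_mk]
  rw [← smul_sub, hC3 (j + 1) (by omega) (by omega), smul_neg]
end
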